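/- Fix ω ∈ [0,1] and B > 0, and set c_B = σ(2B)(1 − σ(2B)). Then for all a, b ∈ [−2B, 2B], g_ω(b) − g_ω(a) ≥ (σ(a) − ω)(b − a) + (c_B/2)(b − a)². In particular g_ω is c_B-strongly convex on [−2B, 2B], its derivative is g_ω'(a) = σ(a) − ω, and its second derivative is σ(a)(1 − σ(a)) ≥ c_B on this interval. -/

import Mathlib

/-
`g_ω'' = σ(1 - σ) = 1 / (2 + 2 cosh t)` decreases in `|t|`, so it is at least `c_B` on
`[-2B, 2B]`. Hence `g_ω - (c_B / 2) t²` is convex there, and its tangent-line inequality at `a`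
is the quadratic lower bound.
-/

noncomputable def sigmoid (t : ℝ) : ℝ := 1 / (1 + Real.exp (-t))

noncomputable def gLoss (ω a : ℝ) : ℝ :=
  -ω * Real.log (sigmoid a) - (1 - ω) * Real.log (1 - sigmoid a)

section StrongConvexity

variable {S : Set ℝ} {f : ℝ → ℝ} {m f' x y : ℝ}

lemma ConvexOn.add_mul_sub_le_of_hasDerivAt (hf : ConvexOn ℝ S f) (hx : x ∈ S) (hy : y ∈ S)
    (hf' : HasDerivAt f f' x) : f x + f' * (y - x) ≤ f y := by
  rcases lt_trichotomy x y with hxy | rfl | hyx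
  · have h := hf.le_slope_of_hasDerivAt hx hy hxy hf'
    rw [slope_def_field, le_div_iff₀ (sub_pos.mpr hxy)] at h
    linarith
  · simp
  · have h := hf.slope_le_of_hasDerivAt hy hx hyx hf'
    rw [slope_def_field, div_le_iff₀ (sub_pos.mpr hyx)] at h
    linarith

lemma strongConvexOn_of_hasDerivWithinAt2_ge (hS : Convex ℝ S) {f' f'' : ℝ → ℝ}
    (hf : ContinuousOn f S) (hf' : ∀ x ∈ interior S, HasDerivWithinAt f (f' x) (interior S) x)
    (hf'' : ∀ x ∈ interior S, HasDerivWithinAt f' (f'' x) (interior S) x)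
    (hm : ∀ x ∈ interior S, m ≤ f'' x) : StrongConvexOn S m f := by
  simp only [strongConvexOn_iff_convex, Real.norm_eq_abs, sq_abs]
  refine convexOn_of_hasDerivWithinAt2_nonneg hS (f' := fun x ↦ f' x - m * x)
    (f'' := fun x ↦ f'' x - m) (hf.sub (by fun_prop)) (fun x hx ↦ ?_) (fun x hx ↦ ?_)
    (fun x hx ↦ sub_nonneg.mpr (hm x hx))
  · exact (hf' x hx).sub (((hasDerivAt_pow 2 x).const_mul (m / 2)).hasDerivWithinAt.congr_deriv
      (by ring))
  · exact (hf'' x hx).sub (((hasDerivAt_id x).const_mul m).hasDerivWithinAt.congr_deriv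
      (by simp))

lemma StrongConvexOn.add_mul_sub_add_sq_le_of_hasDerivAt (hf : StrongConvexOn S m f)
    (hx : x ∈ S) (hy : y ∈ S) (hf' : HasDerivAt f f' x) :
    f x + f' * (y - x) + m / 2 * (y - x) ^ 2 ≤ f y := by
  have hconv : ConvexOn ℝ S fun t ↦ f t - m / 2 * t ^ 2 := by
    simpa only [Real.norm_eq_abs, sq_abs] using strongConvexOn_iff_convex.mp hf
  have hderiv : HasDerivAt (fun t ↦ f t - m / 2 * t ^ 2) (f' - m * x) x :=
    hf'.sub (((hasDerivAt_pow 2 x).const_mul (m / 2)).congr_deriv (by ring))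
  linear_combination hconv.add_mul_sub_le_of_hasDerivAt hx hy hderiv

end StrongConvexity

lemma sigmoid_eq_real_sigmoid : sigmoid = Real.sigmoid :=
  funext fun _ ↦ one_div _

lemma hasDerivAt_sigmoid (t : ℝ) : HasDerivAt sigmoid (sigmoid t * (1 - sigmoid t)) t :=
  sigmoid_eq_real_sigmoid ▸ Real.hasDerivAt_sigmoid t

lemma hasDerivAt_gLoss (ω t : ℝ) : HasDerivAt (gLoss ω) (sigmoid t - ω) t := by
  have hσ : sigmoid t ≠ 0 := (sigmoid_eq_real_sigmoid ▸ Real.sigmoid_pos t).ne'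
  have hσ' : 1 - sigmoid t ≠ 0 :=
    (sub_pos.mpr (sigmoid_eq_real_sigmoid ▸ Real.sigmoid_lt_one t)).ne'
  have hlog := (hasDerivAt_sigmoid t).log hσ
  have hlog' := ((hasDerivAt_sigmoid t).const_sub 1).log hσ'
  refine ((hlog.const_mul (-ω)).sub (hlog'.const_mul (1 - ω))).congr_deriv ?_
  field_simp
  ring

lemma sigmoid_mul_one_sub_sigmoid (t : ℝ) :
    sigmoid t * (1 - sigmoid t) = 1 / (2 + 2 * Real.cosh t) := by
  rw [sigmoid_eq_real_sigmoid, ← Real.sigmoid_neg, Real.sigmoid_def, Real.sigmoid_def,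
    Real.cosh_eq, neg_neg, Real.exp_neg]
  have := Real.exp_pos t
  field_simp
  ring

lemma sigmoid_mul_one_sub_sigmoid_le_of_abs_le {a b : ℝ} (h : |a| ≤ |b|) :
    sigmoid b * (1 - sigmoid b) ≤ sigmoid a * (1 - sigmoid a) := by
  rw [sigmoid_mul_one_sub_sigmoid, sigmoid_mul_one_sub_sigmoid]
  gcongr
  exact Real.cosh_le_cosh.mpr h

theorem stmt_12_general (ω B : ℝ) :
    (∀ a ∈ Set.Icc (-(2 * B)) (2 * B), ∀ b ∈ Set.Icc (-(2 * B)) (2 * B),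
      gLoss ω b - gLoss ω a ≥
        (sigmoid a - ω) * (b - a) +
          (sigmoid (2 * B) * (1 - sigmoid (2 * B)) / 2) * (b - a) ^ 2) ∧
    StrongConvexOn (Set.Icc (-(2 * B)) (2 * B))
      (sigmoid (2 * B) * (1 - sigmoid (2 * B))) (gLoss ω) ∧
    (∀ a : ℝ, HasDerivAt (gLoss ω) (sigmoid a - ω) a) ∧
    (∀ a : ℝ, HasDerivAt (fun t => sigmoid t - ω) (sigmoid a * (1 - sigmoid a)) a) ∧
    (∀ a ∈ Set.Icc (-(2 * B)) (2 * B),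
      sigmoid a * (1 - sigmoid a) ≥ sigmoid (2 * B) * (1 - sigmoid (2 * B))) := by
  have hcurv : ∀ a ∈ Set.Icc (-(2 * B)) (2 * B),
      sigmoid a * (1 - sigmoid a) ≥ sigmoid (2 * B) * (1 - sigmoid (2 * B)) := fun a ha ↦
    sigmoid_mul_one_sub_sigmoid_le_of_abs_le ((abs_le.mpr ha).trans (le_abs_self _))
  have hderiv2 (a : ℝ) : HasDerivAt (fun t ↦ sigmoid t - ω) (sigmoid a * (1 - sigmoid a)) a :=
    (hasDerivAt_sigmoid a).sub_const ω
  have hstrong : StrongConvexOn (Set.Icc (-(2 * B)) (2 * B))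
      (sigmoid (2 * B) * (1 - sigmoid (2 * B))) (gLoss ω) :=
    strongConvexOn_of_hasDerivWithinAt2_ge (convex_Icc _ _)
      (fun x _ ↦ (hasDerivAt_gLoss ω x).continuousAt.continuousWithinAt)
      (fun x _ ↦ (hasDerivAt_gLoss ω x).hasDerivWithinAt)
      (fun x _ ↦ (hderiv2 x).hasDerivWithinAt)
      (fun x hx ↦ hcurv x (interior_subset hx))
  refine ⟨fun a ha b hb ↦ ?_, hstrong, hasDerivAt_gLoss ω, hderiv2, hcurv⟩
  linarith [hstrong.add_mul_sub_add_sq_le_of_hasDerivAt ha hb (hasDerivAt_gLoss ω a)]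

/-- Strong convexity of the Bernoulli cross-entropy loss on [−2B, 2B]: with
c_B = σ(2B)(1−σ(2B)), for all a, b ∈ [−2B,2B],
g_ω(b) − g_ω(a) ≥ (σ(a)−ω)(b−a) + (c_B/2)(b−a)²; in particular g_ω is c_B-strongly convex on
[−2B, 2B], its derivative is σ(a) − ω, and its second derivative is σ(a)(1−σ(a)) ≥ c_B there. -/
theorem stmt_12 (ω B : ℝ) (hω : ω ∈ Set.Icc (0 : ℝ) 1) (hB : 0 < B) :
    (∀ a ∈ Set.Icc (-(2 * B)) (2 * B), ∀ b ∈ Set.Icc (-(2 * B)) (2 * B),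
      gLoss ω b - gLoss ω a ≥
        (sigmoid a - ω) * (b - a) +
          (sigmoid (2 * B) * (1 - sigmoid (2 * B)) / 2) * (b - a) ^ 2) ∧
    StrongConvexOn (Set.Icc (-(2 * B)) (2 * B))
      (sigmoid (2 * B) * (1 - sigmoid (2 * B))) (gLoss ω) ∧
    (∀ a : ℝ, HasDerivAt (gLoss ω) (sigmoid a - ω) a) ∧
    (∀ a : ℝ, HasDerivAt (fun t => sigmoid t - ω) (sigmoid a * (1 - sigmoid a)) a) ∧
    (∀ a ∈ Set.Icc (-(2 * B)) (2 * B),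
      sigmoid a * (1 - sigmoid a) ≥ sigmoid (2 * B) * (1 - sigmoid (2 * B))) :=
  stmt_12_general ω B
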